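/- Let a_j = \sum_{i=0}^{\lfloor j/6 \rfloor} \binom{j-5i}{i}. Then the minimal period of (a_j mod 2) is 63, the minimal period of (a_j mod 3) is 728, and the minimal period of (a_j mod 6) is lcm(63, 728) = 6552. -/
import Mathlib
set_option maxRecDepth 100000


/-- The binomial sum sequence `a_j = ∑_{i=0}^{⌊j/d⌋} C(j - (d-1)i, i)`. -/
def binSum (d j : ℕ) : ℕ :=
  ∑ i ∈ Finset.range (j / d + 1), Nat.choose (j - (d - 1) * i) i

/-- The set of (not necessarily minimal) positive periods of the sequence
`(binSum d j) mod m`. -/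
def periodSet (d m : ℕ) : Set ℕ :=
  {P | 0 < P ∧ ∀ j : ℕ, binSum d (j + P) ≡ binSum d j [MOD m]}


lemma binSum6 (j : ℕ) : binSum 6 j = ∑ i ∈ Finset.range (j/6+1), Nat.choose (j - 5*i) i := by
  norm_num [binSum]

lemma binSum_rec (n : ℕ) : binSum 6 (n+6) = binSum 6 (n+5) + binSum 6 n := by
  have h6 : (n+6)/6 + 1 = (n/6 + 1) + 1 := by omega
  have hA : binSum 6 (n+6)
      = (∑ i ∈ Finset.range (n/6+1), (Nat.choose (n - 5*i) i + Nat.choose (n - 5*i) (i+1))) + 1 := by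
    rw [binSum6, h6, Finset.sum_range_succ']
    congr 1
    apply Finset.sum_congr rfl
    intro i hi
    have hi' : i < n/6 + 1 := Finset.mem_range.mp hi
    have h5 : 5*i ≤ n := by omega
    have : n + 6 - 5*(i+1) = (n - 5*i) + 1 := by omega
    rw [this, Nat.choose_succ_succ]
  have hB : binSum 6 (n+5)
      = (∑ i ∈ Finset.range ((n+5)/6), Nat.choose (n - 5*i) (i+1)) + 1 := by
    rw [binSum6, Finset.sum_range_succ']
    congr 1
    apply Finset.sum_congr rfl
    intro i hi
    have hi' : i < (n+5)/6 := Finset.mem_range.mp hi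
    have : n + 5 - 5*(i+1) = n - 5*i := by omega
    rw [this]
  have hkey : ∑ i ∈ Finset.range ((n+5)/6), Nat.choose (n - 5*i) (i+1)
      = ∑ i ∈ Finset.range (n/6+1), Nat.choose (n - 5*i) (i+1) := by
    apply Finset.sum_subset
    · apply Finset.range_subset_range.mpr; omega
    · intro i hi hni
      have h1 : i < n/6 + 1 := Finset.mem_range.mp hi
      have h2 : ¬ i < (n+5)/6 := fun h => hni (Finset.mem_range.mpr h)
      have hn : n = 6*i := by omega
      have : n - 5*i = i := by omega
      rw [this]
      exact Nat.choose_eq_zero_of_lt (Nat.lt_succ_self i)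
  rw [hA, hB, hkey, Finset.sum_add_distrib, ← binSum6]
  ring

lemma binSum_small : binSum 6 0 = 1 ∧ binSum 6 1 = 1 ∧ binSum 6 2 = 1 ∧
    binSum 6 3 = 1 ∧ binSum 6 4 = 1 ∧ binSum 6 5 = 1 := by decide

abbrev St := ℕ×ℕ×ℕ×ℕ×ℕ×ℕ
def step (m : ℕ) (v : St) : St :=
  (v.2.1, v.2.2.1, v.2.2.2.1, v.2.2.2.2.1, v.2.2.2.2.2, (v.1 + v.2.2.2.2.2) % m)
def Wf (m n : ℕ) : St := (step m)^[n] (1%m,1%m,1%m,1%m,1%m,1%m)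

lemma Wf_spec (m n : ℕ) : Wf m n =
    (binSum 6 n % m, binSum 6 (n+1) % m, binSum 6 (n+2) % m,
     binSum 6 (n+3) % m, binSum 6 (n+4) % m, binSum 6 (n+5) % m) := by
  induction n with
  | zero =>
      obtain ⟨h0, h1, h2, h3, h4, h5⟩ := binSum_small
      simp [Wf, h0, h1, h2, h3, h4, h5]
  | succ n ih =>
      have : Wf m (n+1) = step m (Wf m n) := Function.iterate_succ_apply' _ _ _
      rw [this, ih]
      simp only [step]
      have hrec : binSum 6 (n+6) = binSum 6 (n+5) + binSum 6 n := binSum_rec n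
      have hmod : (binSum 6 n % m + binSum 6 (n+5) % m) % m = binSum 6 (n+1+5) % m := by
        show _ = binSum 6 (n+6) % m
        rw [hrec, Nat.add_comm (binSum 6 (n+5)) (binSum 6 n)]
        exact (Nat.add_mod _ _ _).symm
      simp only [hmod]

def Per (m P : ℕ) : Prop := ∀ j : ℕ, binSum 6 (j + P) ≡ binSum 6 j [MOD m]

lemma per_of_W {m P : ℕ} (h : Wf m P = Wf m 0) : Per m P := by
  rw [Wf_spec, Wf_spec] at h
  simp only [Prod.mk.injEq] at h
  obtain ⟨h0, h1, h2, h3, h4, h5⟩ := h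
  intro j
  induction j using Nat.strong_induction_on with
  | _ j ih =>
    match j with
    | 0 => simpa [Nat.ModEq, Nat.add_comm] using h0
    | 1 => simpa [Nat.ModEq, Nat.add_comm] using h1
    | 2 => simpa [Nat.ModEq, Nat.add_comm] using h2
    | 3 => simpa [Nat.ModEq, Nat.add_comm] using h3
    | 4 => simpa [Nat.ModEq, Nat.add_comm] using h4
    | 5 => simpa [Nat.ModEq, Nat.add_comm] using h5
    | (k+6) =>
      have e1 : k + 6 + P = (k + P) + 6 := by omega
      have e2 : (k + P) + 5 = (k + 5) + P := by omega
      calc binSum 6 (k + 6 + P) = binSum 6 ((k+5) + P) + binSum 6 (k + P) := by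
              rw [e1, binSum_rec, e2]
        _ ≡ binSum 6 (k+5) + binSum 6 k [MOD m] :=
              Nat.ModEq.add (ih (k+5) (by omega)) (ih k (by omega))
        _ = binSum 6 (k+6) := (binSum_rec k).symm

lemma W_of_per {m P : ℕ} (h : Per m P) : Wf m P = Wf m 0 := by
  rw [Wf_spec, Wf_spec]
  have hc : ∀ t, binSum 6 (P + t) % m = binSum 6 t % m := by
    intro t; have := h t; rwa [Nat.add_comm t P] at this
  simp only [Prod.mk.injEq]
  refine ⟨?_, ?_, ?_, ?_, ?_, ?_⟩
  · simpa using hc 0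
  · simpa [Nat.add_comm] using hc 1
  · simpa [Nat.add_comm] using hc 2
  · simpa [Nat.add_comm] using hc 3
  · simpa [Nat.add_comm] using hc 4
  · simpa [Nat.add_comm] using hc 5

lemma per_mul {m P : ℕ} (h : Per m P) (k : ℕ) : Per m (k * P) := by
  induction k with
  | zero => intro j; simpa using Nat.ModEq.refl (binSum 6 j)
  | succ k ih =>
      intro j
      have e : j + (k+1)*P = (j + k*P) + P := by ring
      rw [e]
      exact (h (j + k*P)).trans (ih j)

lemma per_dvd {m P Q : ℕ} (h : Per m P) (hd : P ∣ Q) : Per m Q := by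
  obtain ⟨k, rfl⟩ := hd
  rw [Nat.mul_comm]
  exact per_mul h k

lemma per_mod {m a b : ℕ} (ha : Per m a) (hb : Per m b) : Per m (a % b) := by
  intro j
  have h1 : Per m ((a / b) * b) := per_mul hb (a / b)
  have e : j + a = (j + a % b) + (a / b) * b := by
    have := Nat.mod_add_div' a b
    omega
  have h2 := h1 (j + a % b)
  rw [← e] at h2
  exact h2.symm.trans (ha j)

lemma per_gcd {m : ℕ} : ∀ a b : ℕ, Per m a → Per m b → Per m (Nat.gcd a b) := by
  intro a
  induction a using Nat.strong_induction_on with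
  | _ a ih =>
    intro b ha hb
    match a, ha with
    | 0, _ => simpa using hb
    | (a+1), ha =>
      rw [Nat.gcd_rec]
      exact ih (b % (a+1)) (Nat.mod_lt _ (Nat.succ_pos a)) (a+1) (per_mod hb ha) ha

lemma dvd63 {P : ℕ} (h : Per 2 P) : 63 ∣ P := by
  have h63 : Per 2 63 := per_of_W (by decide)
  have hg : Per 2 (Nat.gcd P 63) := per_gcd P 63 h h63
  have hd : Nat.gcd P 63 ∣ 63 := Nat.gcd_dvd_right P 63
  by_contra hcon
  have hne : Nat.gcd P 63 ≠ 63 := fun he => hcon (he ▸ Nat.gcd_dvd_left P 63)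
  have hlt : Nat.gcd P 63 < 64 := by
    have := Nat.le_of_dvd (by norm_num) hd; omega
  have key : ∀ g < 64, g ∣ 63 → g ≠ 63 → (g ∣ 21 ∨ g ∣ 9) := by decide
  rcases key _ hlt hd hne with h21 | h9
  · exact (by decide : Wf 2 21 ≠ Wf 2 0) (W_of_per (per_dvd hg h21))
  · exact (by decide : Wf 2 9 ≠ Wf 2 0) (W_of_per (per_dvd hg h9))

lemma dvd728 {P : ℕ} (h : Per 3 P) : 728 ∣ P := by
  have h728 : Per 3 728 := per_of_W (by decide)
  have hg : Per 3 (Nat.gcd P 728) := per_gcd P 728 h h728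
  have hd : Nat.gcd P 728 ∣ 728 := Nat.gcd_dvd_right P 728
  by_contra hcon
  have hne : Nat.gcd P 728 ≠ 728 := fun he => hcon (he ▸ Nat.gcd_dvd_left P 728)
  have hlt : Nat.gcd P 728 < 729 := by
    have := Nat.le_of_dvd (by norm_num) hd; omega
  have key : ∀ g < 729, g ∣ 728 → g ≠ 728 → (g ∣ 364 ∨ g ∣ 104 ∨ g ∣ 56) := by decide
  rcases key _ hlt hd hne with h1 | h1 | h1
  · exact (by decide : Wf 3 364 ≠ Wf 3 0) (W_of_per (per_dvd hg h1))
  · exact (by decide : Wf 3 104 ≠ Wf 3 0) (W_of_per (per_dvd hg h1))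
  · exact (by decide : Wf 3 56 ≠ Wf 3 0) (W_of_per (per_dvd hg h1))


theorem stmt_13 :
    IsLeast (periodSet 6 2) 63 ∧ IsLeast (periodSet 6 3) 728 ∧
    Nat.lcm 63 728 = 6552 ∧ IsLeast (periodSet 6 6) 6552 := by
  have p63 : Per 2 63 := per_of_W (by decide)
  have p728 : Per 3 728 := per_of_W (by decide)
  have p2_6552 : Per 2 6552 := per_dvd p63 ⟨104, by norm_num⟩
  have p3_6552 : Per 3 6552 := per_dvd p728 ⟨9, by norm_num⟩
  have p6_6552 : Per 6 6552 := by
    intro j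
    have h2 := p2_6552 j
    have h3 := p3_6552 j
    simp only [Nat.ModEq] at *
    omega
  refine ⟨⟨⟨by norm_num, p63⟩, ?_⟩, ⟨⟨by norm_num, p728⟩, ?_⟩, by norm_num, ⟨⟨by norm_num, p6_6552⟩, ?_⟩⟩
  · rintro P ⟨hP, hper⟩
    exact Nat.le_of_dvd hP (dvd63 hper)
  · rintro P ⟨hP, hper⟩
    exact Nat.le_of_dvd hP (dvd728 hper)
  · rintro P ⟨hP, hper⟩
    have h2 : Per 2 P := by
      intro j; have := hper j; simp only [Nat.ModEq] at *; omega
    have h3 : Per 3 P := by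
      intro j; have := hper j; simp only [Nat.ModEq] at *; omega
    have : Nat.lcm 63 728 ∣ P := Nat.lcm_dvd (dvd63 h2) (dvd728 h3)
    rw [(by norm_num : Nat.lcm 63 728 = 6552)] at this
    exact Nat.le_of_dvd hP this
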